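/- For two ground records A and B with no common labels, the meet A ⊓ B exists and equals the record whose label set is the disjoint union of the label sets of A and B, with each label keeping its associated term. If A and B share labels ℓ₁,...,ℓᵣ, then A ⊓ B exists iff the meets of the corresponding component terms all exist, in which case A ⊓ B is the record on the union of label sets with common labels mapped to component meets and other labels keeping their terms. -/
import Mathlib


/-- Ground MDL terms: atoms (symbols, numbers, strings), nil, tuples, lists,
records and choices (finite label-to-term maps, modelled as partial maps). -/
inductive MTerm : Type where
  | nil : MTerm
  | sym : String → MTerm
  | num : Int → MTerm
  | str : String → MTerm
  | tuple : List MTerm → MTerm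
  | lst : List MTerm → MTerm
  | record : (String → Option MTerm) → MTerm
  | choice : (String → Option MTerm) → MTerm

/-- The seniority relation `⊑` on ground MDL terms. -/
inductive Sr : MTerm → MTerm → Prop where
  | nil (t : MTerm) : Sr t .nil
  | sym (a : String) : Sr (.sym a) (.sym a)
  | num (n : Int) : Sr (.num n) (.num n)
  | str (s : String) : Sr (.str s) (.str s)
  | tuple {ts₁ ts₂ : List MTerm} (hlen : ts₁.length = ts₂.length)
      (h : ∀ (i : ℕ) (h₁ : i < ts₁.length) (h₂ : i < ts₂.length), Sr ts₁[i] ts₂[i]) :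
      Sr (.tuple ts₁) (.tuple ts₂)
  | lst {ts₁ ts₂ : List MTerm} (hlen : ts₂.length ≤ ts₁.length)
      (h : ∀ (i : ℕ) (h₁ : i < ts₁.length) (h₂ : i < ts₂.length), Sr ts₁[i] ts₂[i]) :
      Sr (.lst ts₁) (.lst ts₂)
  | record {f g : String → Option MTerm}
      (hdom : ∀ l t₂, g l = some t₂ → (f l).isSome)
      (h : ∀ l t₁ t₂, f l = some t₁ → g l = some t₂ → Sr t₁ t₂) :
      Sr (.record f) (.record g)
  | choice {f g : String → Option MTerm}
      (hdom : ∀ l t₁, f l = some t₁ → (g l).isSome)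
      (h : ∀ l t₁ t₂, f l = some t₁ → g l = some t₂ → Sr t₁ t₂) :
      Sr (.choice f) (.choice g)

/-- `j` is the least upper bound (join) of `a` and `b` w.r.t. seniority. -/
def MTerm.IsJoin (a b j : MTerm) : Prop :=
  Sr a j ∧ Sr b j ∧ ∀ u, Sr a u → Sr b u → Sr j u

/-- `m` is the greatest lower bound (meet) of `a` and `b` w.r.t. seniority. -/
def MTerm.IsMeet (a b m : MTerm) : Prop :=
  Sr m a ∧ Sr m b ∧ ∀ l, Sr l a → Sr l b → Sr l m

theorem sr_refl (t : MTerm) : Sr t t := by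
  induction t using MTerm.rec
    (motive_2 := fun ts => ∀ i (h : i < ts.length), Sr ts[i] ts[i])
    (motive_3 := fun o => ∀ t, o = some t → Sr t t) with
  | nil => exact .nil _
  | sym a => exact .sym a
  | num n => exact .num n
  | str s => exact .str s
  | tuple ts ih => exact .tuple rfl fun i h₁ _ => ih i h₁
  | lst ts ih => exact .lst le_rfl fun i h₁ _ => ih i h₁
  | record f ih =>
      exact .record (fun l t₂ h => by simp [h]) (fun l t₁ t₂ h1 h2 => by
        cases h1.symm.trans h2; exact ih l t₁ h1)
  | choice f ih =>
      exact .choice (fun l t₂ h => by simp [h]) (fun l t₁ t₂ h1 h2 => by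
        cases h1.symm.trans h2; exact ih l t₁ h1)
  | cons head tail ihh iht =>
      rename_i i h
      match i with
      | 0 => exact ihh
      | n+1 => exact iht n (by simpa using h)
  | none => rename_i h; exact absurd h (by simp)
  | some v ih => rename_i t h; cases h; exact ih
  | _ => intro i h; exact absurd h (by simp)

private lemma meet_general (A B M : String → Option MTerm)
    (hc : ∀ l t₁ t₂, A l = some t₁ → B l = some t₂ →
        ∃ m, M l = some m ∧ MTerm.IsMeet t₁ t₂ m)
    (hA : ∀ l t₁, A l = some t₁ → B l = none → M l = some t₁)
    (hB : ∀ l t₂, B l = some t₂ → A l = none → M l = some t₂)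
    (hn : ∀ l, A l = none → B l = none → M l = none) :
    MTerm.IsMeet (MTerm.record A) (MTerm.record B) (MTerm.record M) := by
  refine ⟨?_, ?_, ?_⟩
  · refine .record ?_ ?_
    · intro l t₁ hA1
      cases hB2 : B l with
      | some t₂ => obtain ⟨m, hm, _⟩ := hc l t₁ t₂ hA1 hB2; simp [hm]
      | none => simp [hA l t₁ hA1 hB2]
    · intro l m t₁ hM hA1
      cases hB2 : B l with
      | some t₂ =>
          obtain ⟨m', hm', hmeet⟩ := hc l t₁ t₂ hA1 hB2
          cases hM.symm.trans hm'
          exact hmeet.1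
      | none =>
          cases hM.symm.trans (hA l t₁ hA1 hB2)
          exact sr_refl _
  · refine .record ?_ ?_
    · intro l t₂ hB2
      cases hA1 : A l with
      | some t₁ => obtain ⟨m, hm, _⟩ := hc l t₁ t₂ hA1 hB2; simp [hm]
      | none => simp [hB l t₂ hB2 hA1]
    · intro l m t₂ hM hB2
      cases hA1 : A l with
      | some t₁ =>
          obtain ⟨m', hm', hmeet⟩ := hc l t₁ t₂ hA1 hB2
          cases hM.symm.trans hm'
          exact hmeet.2.1
      | none =>
          cases hM.symm.trans (hB l t₂ hB2 hA1)
          exact sr_refl _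
  · intro L hLA hLB
    cases hLA with
    | @record f _ hdomA hA' =>
      cases hLB with
      | @record _ _ hdomB hB' =>
        refine .record ?_ ?_
        · intro l m hM
          cases hA1 : A l with
          | some t₁ => exact hdomA l t₁ hA1
          | none =>
            cases hB2 : B l with
            | some t₂ => exact hdomB l t₂ hB2
            | none => rw [hn l hA1 hB2] at hM; cases hM
        · intro l t m hf hM
          cases hA1 : A l with
          | some t₁ =>
            cases hB2 : B l with
            | some t₂ =>
                obtain ⟨m', hm', hmeet⟩ := hc l t₁ t₂ hA1 hB2
                cases hM.symm.trans hm'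
                exact hmeet.2.2 t (hA' l t t₁ hf hA1) (hB' l t t₂ hf hB2)
            | none =>
                cases hM.symm.trans (hA l t₁ hA1 hB2)
                exact hA' l t _ hf hA1
          | none =>
            cases hB2 : B l with
            | some t₂ =>
                cases hM.symm.trans (hB l t₂ hB2 hA1)
                exact hB' l t _ hf hB2
            | none => rw [hn l hA1 hB2] at hM; cases hM

/-- meets of ground records.  With no common labels, the meet is
the disjoint-union record.  In general the meet exists iff the componentwise
meets on common labels exist, in which case it is the record on the union of
the label sets, with component meets on common labels and terms kept elsewhere. -/
theorem record_meet (A B : String → Option MTerm) :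
    ((∀ l, A l = none ∨ B l = none) →
      MTerm.IsMeet (MTerm.record A) (MTerm.record B)
        (MTerm.record fun l => (A l).or (B l))) ∧
    (∀ M : String → Option MTerm,
      (∀ l t₁ t₂, A l = some t₁ → B l = some t₂ →
        ∃ m, M l = some m ∧ MTerm.IsMeet t₁ t₂ m) →
      (∀ l t₁, A l = some t₁ → B l = none → M l = some t₁) →
      (∀ l t₂, B l = some t₂ → A l = none → M l = some t₂) →
      (∀ l, A l = none → B l = none → M l = none) →
      MTerm.IsMeet (MTerm.record A) (MTerm.record B) (MTerm.record M)) ∧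
    ((∃ m, MTerm.IsMeet (MTerm.record A) (MTerm.record B) m) →
      ∀ l t₁ t₂, A l = some t₁ → B l = some t₂ → ∃ g, MTerm.IsMeet t₁ t₂ g) := by
  refine ⟨?_, ?_, ?_⟩
  · intro hdisj
    refine meet_general A B _ ?_ ?_ ?_ ?_
    · intro l t₁ t₂ hA1 hB2
      rcases hdisj l with h | h <;> simp [h] at hA1 hB2 ⊢
    · intro l t₁ hA1 hB2; simp [hA1, hB2]
    · intro l t₂ hB2 hA1; simp [hA1, hB2]
    · intro l hA1 hB2; simp [hA1, hB2]
  · exact fun M => meet_general A B M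
  · rintro ⟨m, hmA, hmB, hmin⟩ l t₁ t₂ hA1 hB2
    cases hmA with
    | @record f _ hdomA hA' =>
      cases hmB with
      | @record _ _ hdomB hB' =>
        obtain ⟨g, hg⟩ := Option.isSome_iff_exists.mp (hdomA l t₁ hA1)
        refine ⟨g, hA' l g t₁ hg hA1, hB' l g t₂ hg hB2, ?_⟩
        intro u huA huB
        have h1 : Sr (.record fun k => if k = l then some u else f k) (.record A) := by
          refine .record ?_ ?_
          · intro k t hk
            by_cases hkl : k = l
            · simp [hkl]
            · simp only [if_neg hkl]; exact hdomA k t hk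
          · intro k tu t hfk hAk
            by_cases hkl : k = l
            · subst hkl
              simp only [if_pos rfl] at hfk
              cases hfk
              cases hAk.symm.trans hA1
              exact huA
            · simp only [if_neg hkl] at hfk
              exact hA' k tu t hfk hAk
        have h2 : Sr (.record fun k => if k = l then some u else f k) (.record B) := by
          refine .record ?_ ?_
          · intro k t hk
            by_cases hkl : k = l
            · simp [hkl]
            · simp only [if_neg hkl]; exact hdomB k t hk
          · intro k tu t hfk hBk
            by_cases hkl : k = l
            · subst hkl
              simp only [if_pos rfl] at hfk
              cases hfk
              cases hBk.symm.trans hB2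
              exact huB
            · simp only [if_neg hkl] at hfk
              exact hB' k tu t hfk hBk
        cases hmin _ h1 h2 with
        | record _ hle => exact hle l u g (by simp) hg
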